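/- arXiv:math/0404231 — 3 statements merged into one kernel-verified Lean document; each statement's English description precedes it below -/
import Mathlib

section
/- The contraction coefficient is submultiplicative: for any two Markov transition kernels π₁, π₂ on a measurable space X, δ(π₁π₂) ≤ δ(π₁)·δ(π₂), where π₁π₂ denotes the composed kernel (π₁π₂)(x,A) = ∫ π₂(y,A) π₁(x,dy). -/
/-!
Write `f y = π₂(y, A)`. Then `(π₁π₂)(x, A) = ∫ f dπ₁(x, ·)`, and `f` has oscillation at most
`δ(π₂)`. After subtracting `inf f`, the layer-cake formula writes `∫ f dμ - ∫ f dν` as an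
integral over `t ∈ (0, δ(π₂)]` of `μ{f > t} - ν{f > t}`, and for `μ = π₁(x₁, ·)`,
`ν = π₁(x₂, ·)` each of these differences is at most `δ(π₁)` in absolute value.
-/

open MeasureTheory ProbabilityTheory

noncomputable def contractionCoeff {S : Type*} [MeasurableSpace S]
    (π : ProbabilityTheory.Kernel S S) : ℝ :=
  sSup {r : ℝ | ∃ x₁ x₂ : S, ∃ A : Set S, MeasurableSet A ∧
    r = |(π x₁ A).toReal - (π x₂ A).toReal|}

open Set

section LayerCake

variable {α : Type*} [MeasurableSpace α] {μ ν : Measure α} {g : α → ℝ} {c d : ℝ}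

theorem integral_eq_setIntegral_Ioc_measureReal_lt (hg : Integrable g μ) (hg_nonneg : 0 ≤ g)
    (hg_le : ∀ a, g a ≤ c) :
    ∫ a, g a ∂μ = ∫ t in Ioc 0 c, μ.real {a | t < g a} := by
  rw [hg.integral_eq_integral_meas_lt (ae_of_all _ hg_nonneg)]
  refine setIntegral_eq_of_subset_of_forall_sdiff_eq_zero measurableSet_Ioi Ioc_subset_Ioi_self ?_
  rintro t ⟨ht_pos, ht⟩
  have hct : c < t := not_le.1 fun h => ht ⟨ht_pos, h⟩
  have : {a | t < g a} = ∅ := eq_empty_of_forall_notMem fun a ha => (hg_le a).not_gt (hct.trans ha)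
  simp [this]

theorem integrableOn_measureReal_lt_Ioc [IsFiniteMeasure μ] (c : ℝ) :
    IntegrableOn (fun t => μ.real {a | t < g a}) (Ioc 0 c) := by
  have hanti : Antitone fun t => μ.real {a | t < g a} := fun s t hst =>
    measureReal_mono fun a ha => hst.trans_lt ha
  exact (hanti.locallyIntegrable.integrableOn_isCompact isCompact_Icc).mono_set Ioc_subset_Icc_self

theorem abs_integral_sub_le_of_nonneg_of_le [IsFiniteMeasure μ] [IsFiniteMeasure ν]
    (hg : Measurable g) (hg_nonneg : 0 ≤ g) (hg_le : ∀ a, g a ≤ c) (hc : 0 ≤ c)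
    (hμν : ∀ s, MeasurableSet s → |μ.real s - ν.real s| ≤ d) :
    |∫ a, g a ∂μ - ∫ a, g a ∂ν| ≤ d * c := by
  have hg_int : ∀ (ρ : Measure α) [IsFiniteMeasure ρ], Integrable g ρ := fun _ _ =>
    .of_bound hg.aestronglyMeasurable c
      (ae_of_all _ fun a => by rw [Real.norm_of_nonneg (hg_nonneg a)]; exact hg_le a)
  calc |∫ a, g a ∂μ - ∫ a, g a ∂ν|
      = ‖∫ t in Ioc 0 c, (μ.real {a | t < g a} - ν.real {a | t < g a})‖ := by
        rw [integral_eq_setIntegral_Ioc_measureReal_lt (hg_int μ) hg_nonneg hg_le,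
          integral_eq_setIntegral_Ioc_measureReal_lt (hg_int ν) hg_nonneg hg_le,
          integral_sub (integrableOn_measureReal_lt_Ioc c) (integrableOn_measureReal_lt_Ioc c),
          Real.norm_eq_abs]
    _ ≤ d * volume.real (Ioc 0 c) :=
        norm_setIntegral_le_of_norm_le_const measure_Ioc_lt_top
          fun t _ => hμν _ (measurableSet_lt measurable_const hg)
    _ = d * c := by rw [Real.volume_real_Ioc_of_le hc, sub_zero]

theorem abs_integral_sub_le_of_sub_le [IsProbabilityMeasure μ] [IsProbabilityMeasure ν]
    {f : α → ℝ} (hf : Measurable f) (hf_osc : ∀ a b, f a - f b ≤ c)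
    (hμν : ∀ s, MeasurableSet s → |μ.real s - ν.real s| ≤ d) :
    |∫ a, f a ∂μ - ∫ a, f a ∂ν| ≤ d * c := by
  have hα := nonempty_of_isProbabilityMeasure μ
  have ⟨a₀⟩ := hα
  have hc : 0 ≤ c := by simpa using hf_osc a₀ a₀
  have hf_bdd : BddBelow (range f) := ⟨f a₀ - c, by rintro _ ⟨a, rfl⟩; linarith [hf_osc a₀ a]⟩
  set m := ⨅ a, f a
  have hm_le : ∀ a, m ≤ f a := ciInf_le hf_bdd
  have hf_le : ∀ a, f a - m ≤ c := fun a =>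
    sub_le_comm.1 (le_ciInf fun b => sub_le_comm.1 (hf_osc a b))
  have hshift : ∀ (ρ : Measure α) [IsProbabilityMeasure ρ],
      ∫ a, (f a - m) ∂ρ = ∫ a, f a ∂ρ - m := fun ρ _ => by
    have hf_int : Integrable f ρ := .of_bound hf.aestronglyMeasurable (|m| + c)
      (ae_of_all _ fun a => by
        rw [Real.norm_eq_abs, abs_le]
        constructor <;> linarith [hm_le a, hf_le a, neg_abs_le m, le_abs_self m])
    rw [integral_sub hf_int (integrable_const m), integral_const]
    simp
  have := abs_integral_sub_le_of_nonneg_of_le (g := fun a => f a - m) (hf.sub measurable_const)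
    (fun a => sub_nonneg.2 (hm_le a)) hf_le hc hμν
  rwa [hshift μ, hshift ν, sub_sub_sub_cancel_right] at this

end LayerCake

theorem ProbabilityTheory.Kernel.comp_real_apply' {α β γ : Type*} [MeasurableSpace α]
    [MeasurableSpace β] [MeasurableSpace γ] (η : Kernel β γ) [IsFiniteKernel η] (κ : Kernel α β)
    (x : α) {A : Set γ} (hA : MeasurableSet A) :
    ((η ∘ₖ κ) x).real A = ∫ y, (η y).real A ∂κ x := by
  rw [measureReal_def, Kernel.comp_apply' _ _ _ hA,
    ← integral_toReal (η.measurable_coe hA).aemeasurable (ae_of_all _ fun y => measure_lt_top _ _)]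
  rfl

section ContractionCoeff

variable {S : Type*} [MeasurableSpace S]

theorem contractionCoeff_nonneg (π : Kernel S S) : 0 ≤ contractionCoeff π :=
  Real.sSup_nonneg <| by rintro _ ⟨_, _, _, _, rfl⟩; exact abs_nonneg _

theorem abs_sub_le_contractionCoeff (π : Kernel S S) [IsMarkovKernel π] (x₁ x₂ : S) {A : Set S}
    (hA : MeasurableSet A) : |(π x₁).real A - (π x₂).real A| ≤ contractionCoeff π := by
  refine le_csSup ⟨1, ?_⟩ ⟨x₁, x₂, A, hA, rfl⟩
  rintro _ ⟨y₁, y₂, B, -, rfl⟩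
  exact abs_sub_le_of_nonneg_of_le measureReal_nonneg measureReal_le_one measureReal_nonneg
    measureReal_le_one

end ContractionCoeff

/-- submultiplicativity of the contraction coefficient:
`δ(π₁π₂) ≤ δ(π₁)·δ(π₂)`, where `(π₁π₂)(x,A) = ∫ π₂(y,A) π₁(x,dy)`.
(Note: in Mathlib's notation the composition `π₁π₂` of the paper is `π₂ ∘ₖ π₁`.) -/
theorem contractionCoeff_comp_le {S : Type*} [MeasurableSpace S]
    (π₁ π₂ : ProbabilityTheory.Kernel S S) [IsMarkovKernel π₁] [IsMarkovKernel π₂] :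
    contractionCoeff (π₂ ∘ₖ π₁) ≤ contractionCoeff π₁ * contractionCoeff π₂ := by
  refine Real.sSup_le ?_ (mul_nonneg (contractionCoeff_nonneg π₁) (contractionCoeff_nonneg π₂))
  rintro _ ⟨x₁, x₂, A, hA, rfl⟩
  change |((π₂ ∘ₖ π₁) x₁).real A - ((π₂ ∘ₖ π₁) x₂).real A| ≤ _
  rw [Kernel.comp_real_apply' π₂ π₁ x₁ hA, Kernel.comp_real_apply' π₂ π₁ x₂ hA]
  exact abs_integral_sub_le_of_sub_le (π₂.measurable_coe hA).ennreal_toReal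
    (fun y₁ y₂ => (le_abs_self _).trans (abs_sub_le_contractionCoeff π₂ y₁ y₂ hA))
    (fun _ hs => abs_sub_le_contractionCoeff π₁ x₁ x₂ hs)
end

section
/- For any two probability measures λ and μ on a measurable space X and any Markov transition kernel π, the total variation distance satisfies ‖(λ − μ)π‖_Var ≤ δ(π)·‖λ − μ‖_Var, where (μπ)(A) = ∫ π(x,A) μ(dx). -/
/-!
For a measurable set `A` put `f x = π(x, A)`, so that `(λπ - μπ)(A) = ∫ f d(λ - μ)` and any two
values of `f` differ by at most `δ(π)`. Shifting `f` by a constant does not change its integral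
against `λ - μ` and makes it take values in `[0, δ(π)]`; for such a function, splitting along a
Hahn decomposition `P` of `λ - μ` gives `∫ f d(λ - μ) ≤ δ(π) (λ - μ)(P) ≤ δ(π) ‖λ - μ‖_Var`.
-/

open MeasureTheory ProbabilityTheory

/-- Total variation distance between two (probability) measures,
`‖λ − μ‖_Var = sup_A |λ(A) − μ(A)|`. -/
noncomputable def tvDist {S : Type*} [MeasurableSpace S] (lam mu : Measure S) : ℝ :=
  sSup {r : ℝ | ∃ A : Set S, MeasurableSet A ∧ r = |(lam A).toReal - (mu A).toReal|}

open Set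

section

variable {S : Type*} [MeasurableSpace S]

lemma tvDist_comm (lam mu : Measure S) : tvDist lam mu = tvDist mu lam := by
  simp only [tvDist, abs_sub_comm (lam _).toReal]

lemma abs_sub_le_tvDist (lam mu : Measure S) [IsFiniteMeasure lam] [IsFiniteMeasure mu]
    {A : Set S} (hA : MeasurableSet A) :
    |(lam A).toReal - (mu A).toReal| ≤ tvDist lam mu := by
  refine le_csSup ⟨lam.real univ + mu.real univ, ?_⟩ ⟨A, hA, rfl⟩
  rintro _ ⟨B, -, rfl⟩
  have hlam : lam.real B ≤ lam.real univ + mu.real univ := by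
    linarith [measureReal_mono (μ := lam) (subset_univ B), measureReal_nonneg (μ := mu) (s := univ)]
  have hmu : mu.real B ≤ lam.real univ + mu.real univ := by
    linarith [measureReal_mono (μ := mu) (subset_univ B), measureReal_nonneg (μ := lam) (s := univ)]
  exact abs_sub_le_of_nonneg_of_le measureReal_nonneg hlam measureReal_nonneg hmu

lemma sub_le_contractionCoeff (π : Kernel S S) [IsFiniteKernel π] (x₁ x₂ : S)
    {A : Set S} (hA : MeasurableSet A) :
    (π x₁ A).toReal - (π x₂ A).toReal ≤ contractionCoeff π := by
  refine (le_abs_self _).trans (le_csSup ⟨π.bound.toReal, ?_⟩ ⟨x₁, x₂, A, hA, rfl⟩)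
  rintro _ ⟨y₁, y₂, B, -, rfl⟩
  have hbound (y : S) : (π y B).toReal ≤ π.bound.toReal :=
    ENNReal.toReal_mono (π.bound_ne_top) (π.measure_le_bound y B)
  exact abs_sub_le_of_nonneg_of_le ENNReal.toReal_nonneg (hbound y₁) ENNReal.toReal_nonneg
    (hbound y₂)

lemma integral_sub_integral_le_mul_tvDist (lam mu : Measure S) [IsProbabilityMeasure lam]
    [IsProbabilityMeasure mu] {g : S → ℝ} {c : ℝ} (hg : Measurable g) (hg0 : ∀ x, 0 ≤ g x)
    (hgc : ∀ x, g x ≤ c) :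
    ∫ x, g x ∂lam - ∫ x, g x ∂mu ≤ c * tvDist lam mu := by
  obtain ⟨x₀⟩ := nonempty_of_isProbabilityMeasure lam
  have hc : 0 ≤ c := (hg0 x₀).trans (hgc x₀)
  have hint (ν : Measure S) [IsFiniteMeasure ν] : Integrable g ν :=
    .of_bound hg.aestronglyMeasurable c <| .of_forall fun x ↦ by
      rw [Real.norm_of_nonneg (hg0 x)]; exact hgc x
  obtain ⟨P, hP, hmu_le, hlam_le⟩ := exists_isHahnDecomposition mu lam
  have h_on_P : ∫ x in P, g x ∂lam - ∫ x in P, g x ∂mu ≤ c * (lam.real P - mu.real P) := by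
    have := integral_mono_measure (f := fun x ↦ c - g x) hmu_le
      (.of_forall fun x ↦ sub_nonneg.2 (hgc x)) ((integrable_const c).sub (hint _))
    rw [integral_sub (integrable_const c) (hint _), integral_sub (integrable_const c) (hint _),
      setIntegral_const, setIntegral_const, smul_eq_mul, smul_eq_mul] at this
    linarith
  have h_on_Pc : ∫ x in Pᶜ, g x ∂lam ≤ ∫ x in Pᶜ, g x ∂mu :=
    integral_mono_measure hlam_le (.of_forall hg0) (hint _)
  calc ∫ x, g x ∂lam - ∫ x, g x ∂mu
      = (∫ x in P, g x ∂lam - ∫ x in P, g x ∂mu) + (∫ x in Pᶜ, g x ∂lam - ∫ x in Pᶜ, g x ∂mu) := by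
        rw [← integral_add_compl hP (hint lam), ← integral_add_compl hP (hint mu)]; ring
    _ ≤ c * (lam.real P - mu.real P) := by linarith
    _ ≤ c * tvDist lam mu :=
        mul_le_mul_of_nonneg_left ((le_abs_self _).trans (abs_sub_le_tvDist lam mu hP)) hc

lemma integral_sub_integral_le_of_forall_sub_le (lam mu : Measure S) [IsProbabilityMeasure lam]
    [IsProbabilityMeasure mu] {f : S → ℝ} {c : ℝ} (hf : Measurable f)
    (hc : ∀ x y, f x - f y ≤ c) :
    ∫ x, f x ∂lam - ∫ x, f x ∂mu ≤ c * tvDist lam mu := by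
  obtain ⟨x₀⟩ := nonempty_of_isProbabilityMeasure lam
  have : Nonempty S := ⟨x₀⟩
  have hbdd : BddAbove (range f) := ⟨f x₀ + c, by rintro _ ⟨x, rfl⟩; linarith [hc x x₀]⟩
  set s := ⨆ x, f x
  have hint (ν : Measure S) [IsFiniteMeasure ν] : Integrable f ν :=
    .of_bound hf.aestronglyMeasurable (|f x₀| + c) <| .of_forall fun x ↦ by
      rw [Real.norm_eq_abs]
      have := abs_sub_le_iff.2 ⟨hc x x₀, hc x₀ x⟩
      linarith [abs_sub_abs_le_abs_sub (f x) (f x₀)]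
  have hs_le (x : S) : s ≤ f x + c := ciSup_le fun y ↦ by linarith [hc y x]
  have := integral_sub_integral_le_mul_tvDist lam mu (g := fun x ↦ f x - (s - c)) (c := c)
    (hf.sub_const _) (fun x ↦ by linarith [hs_le x]) (fun x ↦ by linarith [le_ciSup hbdd x])
  rwa [integral_sub (hint lam) (integrable_const _), integral_sub (hint mu) (integrable_const _),
    integral_const, integral_const, probReal_univ, probReal_univ, one_smul,
    sub_sub_sub_cancel_right] at this

lemma toReal_bind_apply {T : Type*} [MeasurableSpace T] (μ : Measure S) (π : Kernel S T)
    [IsFiniteKernel π] {A : Set T} (hA : MeasurableSet A) :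
    (μ.bind (fun x ↦ π x) A).toReal = ∫ x, (π x A).toReal ∂μ := by
  rw [Measure.bind_apply hA π.measurable.aemeasurable,
    integral_toReal (π.measurable_coe hA).aemeasurable (.of_forall fun x ↦ measure_lt_top _ _)]

lemma toReal_bind_sub_toReal_bind_le (lam mu : Measure S) [IsProbabilityMeasure lam]
    [IsProbabilityMeasure mu] (π : Kernel S S) [IsFiniteKernel π] {A : Set S}
    (hA : MeasurableSet A) :
    (lam.bind (fun x ↦ π x) A).toReal - (mu.bind (fun x ↦ π x) A).toReal ≤
      contractionCoeff π * tvDist lam mu := by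
  rw [toReal_bind_apply lam π hA, toReal_bind_apply mu π hA]
  exact integral_sub_integral_le_of_forall_sub_le lam mu (π.measurable_coe hA).ennreal_toReal
    fun x y ↦ sub_le_contractionCoeff π x y hA

end

/-- `‖(λ − μ)π‖_Var ≤ δ(π)·‖λ − μ‖_Var`, where `(μπ)(A) = ∫ π(x,A) μ(dx)`. -/
theorem tvDist_bind_le {S : Type*} [MeasurableSpace S]
    (lam mu : Measure S) [IsProbabilityMeasure lam] [IsProbabilityMeasure mu]
    (π : ProbabilityTheory.Kernel S S) [IsMarkovKernel π] :
    tvDist (lam.bind (fun x => π x)) (mu.bind (fun x => π x)) ≤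
      contractionCoeff π * tvDist lam mu := by
  refine csSup_le ⟨_, ∅, .empty, rfl⟩ ?_
  rintro _ ⟨A, hA, rfl⟩
  exact abs_sub_le_iff.2 ⟨toReal_bind_sub_toReal_bind_le lam mu π hA,
    tvDist_comm mu lam ▸ toReal_bind_sub_toReal_bind_le mu lam π hA⟩
end

section
/- (LLN for triangular arrays with small oscillation of conditional tails) For each n, let Y₁⁽ⁿ⁾,…,Y_n⁽ⁿ⁾ be non-negative random variables and F_l⁽ⁿ⁾ nested σ-fields with σ(Y₁⁽ⁿ⁾,…,Y_l⁽ⁿ⁾) ⊆ F_l⁽ⁿ⁾. Suppose (i) E[Σ_{l=1}^n Y_l⁽ⁿ⁾] → 1, (ii) max_l ‖Y_l⁽ⁿ⁾‖_∞ ≤ ε_n with ε_n → 0, and (iii) sup_{1≤l≤n−1} Osc(E[Σ_{j=l+1}^n Y_j⁽ⁿ⁾ | F_l⁽ⁿ⁾]) → 0, where Osc denotes the (essential) supremum minus infimum over sample points. Then Σ_{l=1}^n Y_l⁽ⁿ⁾ → 1 in L². -/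
/-! With `S = ∑ Y_l` and `T_l = ∑_{j > l} Y_j`, we have `E[(S - 1)²] = Var S + (E S - 1)²`, so it
suffices that `Var S → 0`. Expanding, `Var S = ∑_l (Var Y_l + 2 Cov(Y_l, T_l))`. Since
`0 ≤ Y_l ≤ ε`, `Var Y_l ≤ ε E Y_l`. Since `Y_l` is `F_l`-measurable,
`Cov(Y_l, T_l) = E[Y_l (E[T_l | F_l] - E T_l)]`, and a conditional expectation with oscillation
at most `δ` stays within `δ` of its mean, so `|Cov(Y_l, T_l)| ≤ δ E Y_l`. Hence
`Var S ≤ (ε + 2δ) E S`, which tends to `2δ` for every `δ > 0`. -/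

open MeasureTheory ProbabilityTheory Filter
open scoped Finset

theorem Finset.sum_Icc_sum_Icc_eq_of_symm {R : Type*} [CommSemiring R] (c : ℕ → ℕ → R)
    (hc : ∀ i j, c i j = c j i) (n : ℕ) :
    ∑ i ∈ Finset.Icc 1 n, ∑ j ∈ Finset.Icc 1 n, c i j =
      ∑ i ∈ Finset.Icc 1 n, (c i i + 2 * ∑ j ∈ Finset.Icc (i + 1) n, c i j) := by
  induction n with
  | zero => simp
  | succ n ih =>
    have htail : ∀ i ∈ Finset.Icc 1 n, c i i + 2 * ∑ j ∈ Finset.Icc (i + 1) (n + 1), c i j =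
        c i i + 2 * ∑ j ∈ Finset.Icc (i + 1) n, c i j + 2 * c i (n + 1) := fun i hi => by
      rw [Finset.sum_Icc_succ_top (by simp at hi; omega)]
      ring
    conv_rhs => rw [Finset.sum_Icc_succ_top (Nat.le_add_left 1 n), Finset.sum_congr rfl htail,
      Finset.sum_add_distrib, ← ih]
    simp only [Finset.sum_Icc_succ_top (Nat.le_add_left 1 n), Finset.sum_add_distrib,
      Finset.Icc_eq_empty_of_lt (Nat.lt_succ_self (n + 1)), Finset.sum_empty, ← Finset.mul_sum,
      hc (n + 1)]
    ring

lemma Filter.Tendsto.of_forall_eventually_le_mul {α : Type*} {l : Filter α} {D ε m : α → ℝ}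
    {c : ℝ} (hD : ∀ a, 0 ≤ D a) (hε : Tendsto ε l (nhds 0)) (hm : Tendsto m l (nhds c))
    (h : ∀ δ > 0, ∀ᶠ a in l, D a ≤ (ε a + δ) * m a) : Tendsto D l (nhds 0) := by
  refine tendsto_order.2 ⟨fun b hb => Eventually.of_forall fun a => hb.trans_le (hD a),
    fun e he => ?_⟩
  set δ := e / (2 * (|c| + 1))
  have hδ : 0 < δ := by positivity
  have hδc : (0 + δ) * c < e := by
    rw [zero_add, div_mul_eq_mul_div, div_lt_iff₀ (by positivity)]
    nlinarith [le_abs_self c, abs_nonneg c]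
  filter_upwards [h δ hδ, ((hε.add_const δ).mul hm).eventually_lt_const hδc] with a ha ha'
  exact ha.trans_lt ha'

section

variable {Ω : Type*} {m0 : MeasurableSpace Ω} {μ : Measure Ω}

lemma memLp_of_nonneg_of_le [IsFiniteMeasure μ] {X : Ω → ℝ} {C : ℝ} {p : ENNReal}
    (hX : AEStronglyMeasurable X μ) (h0 : ∀ ω, 0 ≤ X ω) (hC : ∀ ω, X ω ≤ C) : MemLp X p μ :=
  .of_bound hX C (ae_of_all _ fun ω => (Real.norm_of_nonneg (h0 ω)).trans_le (hC ω))

lemma ae_abs_sub_integral_le_essSup_sub_essInf [IsProbabilityMeasure μ] {f : Ω → ℝ}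
    (hf : Integrable f μ) (hbdd_above : IsBoundedUnder (· ≤ ·) (ae μ) f)
    (hbdd_below : IsBoundedUnder (· ≥ ·) (ae μ) f) :
    ∀ᵐ ω ∂μ, |f ω - μ[f]| ≤ essSup f μ - essInf f μ := by
  have hsup := ae_le_essSup hbdd_above
  have hinf := ae_essInf_le hbdd_below
  have hmean_le : μ[f] ≤ essSup f μ := by
    simpa using integral_mono_ae hf (integrable_const _) hsup
  have hle_mean : essInf f μ ≤ μ[f] := by
    simpa using integral_mono_ae (integrable_const _) hf hinf
  filter_upwards [hsup, hinf] with ω h₁ h₂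
  exact abs_le.2 ⟨by linarith, by linarith⟩

lemma ae_abs_condExp_sub_integral_le_essSup_sub_essInf [IsProbabilityMeasure μ]
    {m : MeasurableSpace Ω} (hm : m ≤ m0) {f : Ω → ℝ} {R : ℝ} (hf : ∀ᵐ ω ∂μ, |f ω| ≤ R) :
    ∀ᵐ ω ∂μ, |μ[f|m] ω - μ[f]| ≤ essSup (μ[f|m]) μ - essInf (μ[f|m]) μ := by
  have hbdd : ∀ᵐ ω ∂μ, |μ[f|m] ω| ≤ R := ae_bdd_abs_condExp_of_ae_bdd_abs hf
  rw [← integral_condExp hm]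
  exact ae_abs_sub_integral_le_essSup_sub_essInf integrable_condExp
    ⟨R, eventually_map.2 (hbdd.mono fun ω h => (abs_le.1 h).2)⟩
    ⟨-R, eventually_map.2 (hbdd.mono fun ω h => (abs_le.1 h).1)⟩

lemma variance_le_mul_integral [IsProbabilityMeasure μ] {X : Ω → ℝ} {ε : ℝ}
    (hX : Integrable X μ) (h0 : 0 ≤ᵐ[μ] X) (hε : ∀ᵐ ω ∂μ, X ω ≤ ε) :
    Var[X; μ] ≤ ε * μ[X] :=
  calc Var[X; μ] ≤ μ[X ^ 2] := variance_le_expectation_sq hX.aestronglyMeasurable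
    _ ≤ μ[fun ω => ε * X ω] := by
      refine integral_mono_of_nonneg (ae_of_all _ fun ω => sq_nonneg (X ω)) (hX.const_mul ε) ?_
      filter_upwards [h0, hε] with ω h₀ h₁
      simpa [sq] using mul_le_mul_of_nonneg_right h₁ h₀
    _ = ε * μ[X] := integral_const_mul ε _

lemma abs_covariance_le_of_ae_abs_condExp_sub_le [IsProbabilityMeasure μ]
    {m : MeasurableSpace Ω} (hm : m ≤ m0) {X T : Ω → ℝ} {δ : ℝ}
    (hXm : StronglyMeasurable[m] X) (hX0 : 0 ≤ᵐ[μ] X) (hX : MemLp X 2 μ) (hT : MemLp T 2 μ)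
    (hclose : ∀ᵐ ω ∂μ, |μ[T|m] ω - μ[T]| ≤ δ) :
    |cov[X, T; μ]| ≤ δ * μ[X] := by
  have hXint : Integrable X μ := hX.integrable one_le_two
  have hpull : μ[X * T|m] =ᵐ[μ] X * μ[T|m] :=
    condExp_mul_of_stronglyMeasurable_left hXm (hX.integrable_mul hT) (hT.integrable one_le_two)
  have hXg : Integrable (X * μ[T|m]) μ := integrable_condExp.congr hpull
  have hcov : cov[X, T; μ] = ∫ ω, X ω * (μ[T|m] ω - μ[T]) ∂μ := by
    rw [covariance_eq_sub hX hT, ← integral_condExp hm (f := X * T), integral_congr_ae hpull,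
      ← integral_mul_const, ← integral_sub hXg (hXint.mul_const _)]
    simp only [Pi.mul_apply, mul_sub]
  rw [hcov, ← integral_const_mul, ← Real.norm_eq_abs]
  refine norm_integral_le_of_norm_le (hXint.const_mul δ) ?_
  filter_upwards [hX0, hclose] with ω h₀ h₁
  rw [norm_mul, Real.norm_of_nonneg h₀, Real.norm_eq_abs, mul_comm δ]
  exact mul_le_mul_of_nonneg_left h₁ h₀

lemma variance_sum_Icc_eq [IsFiniteMeasure μ] {X : ℕ → Ω → ℝ} (hX : ∀ l, MemLp (X l) 2 μ)
    (n : ℕ) :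
    Var[fun ω => ∑ l ∈ Finset.Icc 1 n, X l ω; μ] =
      ∑ l ∈ Finset.Icc 1 n,
        (Var[X l; μ] + 2 * cov[X l, fun ω => ∑ j ∈ Finset.Icc (l + 1) n, X j ω; μ]) := by
  rw [variance_fun_sum' fun l _ => hX l,
    Finset.sum_Icc_sum_Icc_eq_of_symm _ fun i j => covariance_comm (X i) (X j)]
  refine Finset.sum_congr rfl fun l _ => ?_
  rw [covariance_self (hX l).aemeasurable, covariance_fun_sum_right' (fun j _ => hX j) (hX l)]

lemma variance_sum_Icc_le [IsProbabilityMeasure μ] {X : ℕ → Ω → ℝ}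
    {F : ℕ → MeasurableSpace Ω} {n : ℕ} {ε δ : ℝ} (hF : ∀ l, F l ≤ m0)
    (hXF : ∀ l, StronglyMeasurable[F l] (X l)) (hX0 : ∀ l ω, 0 ≤ X l ω)
    (hXε : ∀ l ω, X l ω ≤ ε)
    (hclose : ∀ l ∈ Finset.Icc 1 n, ∀ᵐ ω ∂μ,
      |μ[fun ω => ∑ j ∈ Finset.Icc (l + 1) n, X j ω|F l] ω -
        ∫ ω, ∑ j ∈ Finset.Icc (l + 1) n, X j ω ∂μ| ≤ δ) :
    Var[fun ω => ∑ l ∈ Finset.Icc 1 n, X l ω; μ] ≤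
      (ε + 2 * δ) * ∫ ω, ∑ l ∈ Finset.Icc 1 n, X l ω ∂μ := by
  have hX : ∀ l, MemLp (X l) 2 μ := fun l =>
    memLp_of_nonneg_of_le ((hXF l).mono (hF l)).aestronglyMeasurable (hX0 l) (hXε l)
  rw [variance_sum_Icc_eq hX,
    integral_finsetSum _ fun l _ => (hX l).integrable one_le_two, Finset.mul_sum]
  refine Finset.sum_le_sum fun l hl => ?_
  have hvar := variance_le_mul_integral ((hX l).integrable one_le_two) (ae_of_all _ (hX0 l))
    (ae_of_all _ (hXε l))
  have hcov := abs_covariance_le_of_ae_abs_condExp_sub_le (hF l) (hXF l) (ae_of_all _ (hX0 l))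
    (hX l) (memLp_finsetSum _ fun j _ => hX j) (hclose l hl)
  linarith [le_abs_self (cov[X l, fun ω => ∑ j ∈ Finset.Icc (l + 1) n, X j ω; μ])]

lemma integral_sub_const_sq [IsProbabilityMeasure μ] {X : Ω → ℝ} (hX : MemLp X 2 μ) (c : ℝ) :
    ∫ ω, (X ω - c) ^ 2 ∂μ = Var[X; μ] + (μ[X] - c) ^ 2 := by
  rw [← variance_sub_const hX.aestronglyMeasurable c,
    variance_eq_sub (X := fun ω => X ω - c) (hX.sub (memLp_const c)),
    integral_sub (hX.integrable one_le_two) (integrable_const c)]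
  simp

end

theorem triangular_array_LLN_general {Ω : Type*} [MeasurableSpace Ω]
    (P : Measure Ω) [IsProbabilityMeasure P]
    (Y : ℕ → ℕ → Ω → ℝ) (hYmeas : ∀ n l, Measurable (Y n l))
    (hYpos : ∀ n l ω, 0 ≤ Y n l ω)
    (F : ℕ → ℕ → MeasurableSpace Ω)
    (hFle : ∀ n l, F n l ≤ ‹MeasurableSpace Ω›)
    (hFgen : ∀ n l j, j ≤ l → MeasurableSpace.comap (Y n j) inferInstance ≤ F n l)
    (hmean : Tendsto (fun n => ∫ ω, ∑ l ∈ Finset.Icc 1 n, Y n l ω ∂P) atTop (nhds 1))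
    (ε : ℕ → ℝ) (hε : Tendsto ε atTop (nhds 0))
    (hYbdd : ∀ n l ω, Y n l ω ≤ ε n)
    (hosc : ∀ δ : ℝ, 0 < δ → ∃ N : ℕ, ∀ n ≥ N, ∀ l, 1 ≤ l → l ≤ n - 1 →
      essSup (fun ω => (P[fun ω => ∑ j ∈ Finset.Icc (l + 1) n, Y n j ω | F n l]) ω) P -
        essInf (fun ω => (P[fun ω => ∑ j ∈ Finset.Icc (l + 1) n, Y n j ω | F n l]) ω) P
          ≤ δ) :
    Tendsto (fun n => ∫ ω, (∑ l ∈ Finset.Icc 1 n, Y n l ω - 1) ^ 2 ∂P)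
      atTop (nhds 0) := by
  have hclose : ∀ δ > 0, ∀ᶠ n in atTop, ∀ l ∈ Finset.Icc 1 n, ∀ᵐ ω ∂P,
      |P[fun ω => ∑ j ∈ Finset.Icc (l + 1) n, Y n j ω | F n l] ω -
        ∫ ω, ∑ j ∈ Finset.Icc (l + 1) n, Y n j ω ∂P| ≤ δ := by
    intro δ hδ
    obtain ⟨N, hN⟩ := hosc δ hδ
    filter_upwards [eventually_ge_atTop N] with n hn l hl
    obtain ⟨hl₁, hl₂⟩ := Finset.mem_Icc.1 hl
    obtain rfl | hln := eq_or_ne l n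
    · simp [hδ.le]
    have htail : ∀ ω, |∑ j ∈ Finset.Icc (l + 1) n, Y n j ω| ≤ #(Finset.Icc (l + 1) n) • ε n :=
      fun ω => by
        rw [abs_of_nonneg (Finset.sum_nonneg fun j _ => hYpos n j ω)]
        exact Finset.sum_le_card_nsmul _ _ _ fun j _ => hYbdd n j ω
    filter_upwards [ae_abs_condExp_sub_integral_le_essSup_sub_essInf (hFle n l)
      (ae_of_all _ htail)] with ω hω
    exact hω.trans (hN n hn l hl₁ (Nat.le_sub_one_of_lt (hl₂.lt_of_ne hln)))
  have hvar : Tendsto (fun n => Var[fun ω => ∑ l ∈ Finset.Icc 1 n, Y n l ω; P]) atTop (nhds 0) :=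
    .of_forall_eventually_le_mul (fun n => variance_nonneg _ _) hε hmean fun δ hδ =>
      (hclose (δ / 2) (half_pos hδ)).mono fun n hn =>
        (variance_sum_Icc_le (hFle n)
          (fun l => (measurable_iff_comap_le.2 (hFgen n l l le_rfl)).stronglyMeasurable)
          (hYpos n) (hYbdd n) hn).trans_eq (by ring)
  have hL2 : ∀ n, MemLp (fun ω => ∑ l ∈ Finset.Icc 1 n, Y n l ω) 2 P := fun n =>
    memLp_finsetSum _ fun l _ =>
      memLp_of_nonneg_of_le (hYmeas n l).aestronglyMeasurable (hYpos n l) (hYbdd n l)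
  simp_rw [integral_sub_const_sq (hL2 _)]
  simpa using hvar.add ((hmean.sub_const 1).pow 2)

/-- LLN for triangular arrays of non-negative bounded variables whose
conditional tail expectations have uniformly small oscillation:
`Σ_{l=1}^n Y_l⁽ⁿ⁾ → 1` in `L²`. -/
theorem triangular_array_LLN {Ω : Type*} [MeasurableSpace Ω]
    (P : Measure Ω) [IsProbabilityMeasure P]
    (Y : ℕ → ℕ → Ω → ℝ) (hYmeas : ∀ n l, Measurable (Y n l))
    (hYpos : ∀ n l ω, 0 ≤ Y n l ω)
    (F : ℕ → ℕ → MeasurableSpace Ω)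
    (hFle : ∀ n l, F n l ≤ ‹MeasurableSpace Ω›)
    (hFmono : ∀ n l, F n l ≤ F n (l + 1))
    (hFgen : ∀ n l j, j ≤ l → MeasurableSpace.comap (Y n j) inferInstance ≤ F n l)
    (hmean : Tendsto (fun n => ∫ ω, ∑ l ∈ Finset.Icc 1 n, Y n l ω ∂P) atTop (nhds 1))
    (ε : ℕ → ℝ) (hε : Tendsto ε atTop (nhds 0))
    (hYbdd : ∀ n l ω, Y n l ω ≤ ε n)
    (hosc : ∀ δ : ℝ, 0 < δ → ∃ N : ℕ, ∀ n ≥ N, ∀ l, 1 ≤ l → l ≤ n - 1 →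
      essSup (fun ω => (P[fun ω => ∑ j ∈ Finset.Icc (l + 1) n, Y n j ω | F n l]) ω) P -
        essInf (fun ω => (P[fun ω => ∑ j ∈ Finset.Icc (l + 1) n, Y n j ω | F n l]) ω) P
          ≤ δ) :
    Tendsto (fun n => ∫ ω, (∑ l ∈ Finset.Icc 1 n, Y n l ω - 1) ^ 2 ∂P)
      atTop (nhds 0) :=
  triangular_array_LLN_general P Y hYmeas hYpos F hFle hFgen hmean ε hε hYbdd hosc
end
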